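/- Let A, B be positive definite n×n complex matrices and t ∈ [0,1], with r = min{t, 1−t} and R = max{t, 1−t}. Then, in the Loewner order, 2r·(A ∇ B − A ♯ B) ≤ A ∇_t B − A ♯_t B ≤ 2R·(A ∇ B − A ♯ B). -/

import Mathlib

open Matrix ComplexOrder

/-- Real power of a (Hermitian) matrix via the continuous functional calculus. -/
noncomputable def mrpow {n : ℕ} (A : Matrix (Fin n) (Fin n) ℂ) (t : ℝ) :
    Matrix (Fin n) (Fin n) ℂ :=
  cfc (fun x : ℝ => x ^ t) A

/-- The weighted geometric mean `A ♯_t B = A^{1/2} (A^{-1/2} B A^{-1/2})^t A^{1/2}`. -/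
noncomputable def geomMean {n : ℕ} (A B : Matrix (Fin n) (Fin n) ℂ) (t : ℝ) :
    Matrix (Fin n) (Fin n) ℂ :=
  mrpow A (1 / 2) * mrpow (mrpow A (-(1 / 2)) * B * mrpow A (-(1 / 2))) t * mrpow A (1 / 2)

/-- The weighted arithmetic mean `A ∇_t B = (1-t)A + tB`. -/
noncomputable def arithMean {n : ℕ} (A B : Matrix (Fin n) (Fin n) ℂ) (t : ℝ) :
    Matrix (Fin n) (Fin n) ℂ :=
  (1 - t) • A + t • B

/-!
Writing `S = A^{1/2}` and `C = A^{-1/2} B A^{-1/2}`, both `A ∇_t B - A ♯_t B` and `A ∇ B - A ♯ B`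
are congruences `S f(C) S` of functions of the single positive matrix `C`, with
`f = meanGap t` resp. `meanGap (1/2)`, where `meanGap t x = (1 - t) + t x - x^t`. Congruence by `S`
and the functional calculus are monotone, so it suffices to compare the scalar functions on
`(0, ∞)`. For fixed `x > 0`, `t ↦ meanGap t x` is concave (affine minus the convex `t ↦ x^t`) and
vanishes at `t = 0, 1`, and a concave function `g` on `[0, 1]` with `g 0 = g 1 = 0` satisfies
`2 min(t, 1-t) g(1/2) ≤ g t ≤ 2 max(t, 1-t) g(1/2)` by comparing `t` with `1/2` and an endpoint.
-/

open Set
open scoped MatrixOrder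

theorem ConcaveOn.two_mul_min_mul_le {g : ℝ → ℝ} (hg : ConcaveOn ℝ (Icc 0 1) g)
    (h0 : g 0 = 0) (h1 : g 1 = 0) {t : ℝ} (ht : t ∈ Icc (0 : ℝ) 1) :
    2 * min t (1 - t) * g (1 / 2) ≤ g t := by
  obtain ⟨ht0, ht1⟩ := ht
  have hhalf : (1 / 2 : ℝ) ∈ Icc (0 : ℝ) 1 := by norm_num
  rcases le_total t (1 / 2) with h | h
  · have key := hg.2 (left_mem_Icc.2 zero_le_one) hhalf
      (show 0 ≤ 1 - 2 * t by linarith) (show 0 ≤ 2 * t by linarith) (by ring)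
    rw [show (1 - 2 * t) • (0 : ℝ) + (2 * t) • (1 / 2 : ℝ) = t by simp only [smul_eq_mul]; ring,
      h0, smul_zero, zero_add, smul_eq_mul] at key
    rwa [min_eq_left (by linarith)]
  · have key := hg.2 hhalf (right_mem_Icc.2 zero_le_one)
      (show 0 ≤ 2 - 2 * t by linarith) (show 0 ≤ 2 * t - 1 by linarith) (by ring)
    rw [show (2 - 2 * t) • (1 / 2 : ℝ) + (2 * t - 1) • (1 : ℝ) = t by
        simp only [smul_eq_mul]; ring, h1, smul_zero, add_zero, smul_eq_mul] at key
    rw [min_eq_right (by linarith)]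
    linarith

theorem ConcaveOn.le_two_mul_max_mul {g : ℝ → ℝ} (hg : ConcaveOn ℝ (Icc 0 1) g)
    (h0 : g 0 = 0) (h1 : g 1 = 0) {t : ℝ} (ht : t ∈ Icc (0 : ℝ) 1) :
    g t ≤ 2 * max t (1 - t) * g (1 / 2) := by
  obtain ⟨ht0, ht1⟩ := ht
  rcases le_total t (1 / 2) with h | h
  · have hpos : 0 < 2 * (1 - t) := by linarith
    have hne : 1 - t ≠ 0 := by linarith
    have key := hg.2 ⟨ht0, ht1⟩ (right_mem_Icc.2 zero_le_one) (inv_nonneg.2 hpos.le)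
      (show 0 ≤ (1 - 2 * t) * (2 * (1 - t))⁻¹ by apply mul_nonneg <;> linarith [inv_pos.2 hpos])
      (by field_simp; ring)
    rw [show (2 * (1 - t))⁻¹ • t + ((1 - 2 * t) * (2 * (1 - t))⁻¹) • (1 : ℝ) = 1 / 2 by
        simp only [smul_eq_mul]; field_simp; ring,
      h1, smul_zero, add_zero, smul_eq_mul, inv_mul_le_iff₀ hpos] at key
    rwa [max_eq_right (by linarith)]
  · have hpos : 0 < 2 * t := by linarith
    have key := hg.2 ⟨ht0, ht1⟩ (left_mem_Icc.2 zero_le_one) (inv_nonneg.2 hpos.le)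
      (show 0 ≤ 1 - (2 * t)⁻¹ by rw [sub_nonneg]; apply inv_le_one_of_one_le₀; linarith)
      (by ring)
    rw [show (2 * t)⁻¹ • t + (1 - (2 * t)⁻¹) • (0 : ℝ) = 1 / 2 by
        simp only [smul_eq_mul, mul_zero, add_zero]; field_simp,
      h0, smul_zero, add_zero, smul_eq_mul, inv_mul_le_iff₀ hpos] at key
    rwa [max_eq_left (by linarith)]

noncomputable def meanGap (t x : ℝ) : ℝ := (1 - t) + t * x - x ^ t

theorem meanGap_zero (x : ℝ) : meanGap 0 x = 0 := by simp [meanGap]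

theorem meanGap_one (x : ℝ) : meanGap 1 x = 0 := by simp [meanGap]

theorem concaveOn_meanGap {x : ℝ} (hx : 0 < x) : ConcaveOn ℝ univ (meanGap · x) := by
  have affine : ConcaveOn ℝ univ (fun t : ℝ => (1 - t) + t * x) :=
    ⟨convex_univ, fun a _ b _ μ ν _ _ hμν => le_of_eq <| by
      simp only [smul_eq_mul]; linear_combination hμν⟩
  exact affine.sub (convexOn_rpow_left hx)

section mrpow

variable {n : ℕ} {A : Matrix (Fin n) (Fin n) ℂ}

theorem isHermitian_mrpow (A : Matrix (Fin n) (Fin n) ℂ) (s : ℝ) : (mrpow A s).IsHermitian :=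
  cfc_predicate _ A

theorem mrpow_zero (hA : A.IsHermitian) : mrpow A 0 = 1 := by
  rw [mrpow, cfc_congr fun x _ => Real.rpow_zero x]
  exact cfc_const_one ℝ A

theorem mrpow_one (hA : A.IsHermitian) : mrpow A 1 = A := by
  rw [mrpow, cfc_congr fun x _ => Real.rpow_one x]
  exact cfc_id' ℝ A

theorem mrpow_add (hA : A.PosDef) (s u : ℝ) : mrpow A (s + u) = mrpow A s * mrpow A u := by
  rw [mrpow, mrpow, mrpow, ← cfc_mul _ _ A (finite_real_spectrum.continuousOn _)
    (finite_real_spectrum.continuousOn _)]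
  exact cfc_congr fun x hx =>
    Real.rpow_add (hA.isStrictlyPositive.spectrum_pos hx) s u

theorem mrpow_half_mul_mrpow_neg_half (hA : A.PosDef) :
    mrpow A (1 / 2) * mrpow A (-(1 / 2)) = 1 := by
  rw [← mrpow_add hA, add_neg_cancel, mrpow_zero hA.isHermitian]

theorem mrpow_neg_half_mul_mrpow_half (hA : A.PosDef) :
    mrpow A (-(1 / 2)) * mrpow A (1 / 2) = 1 := by
  rw [← mrpow_add hA, neg_add_cancel, mrpow_zero hA.isHermitian]

theorem mrpow_half_mul_self (hA : A.PosDef) : mrpow A (1 / 2) * mrpow A (1 / 2) = A := by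
  rw [← mrpow_add hA, add_halves, mrpow_one hA.isHermitian]

theorem Matrix.PosDef.mrpow_neg_half_conj {B : Matrix (Fin n) (Fin n) ℂ} (hA : A.PosDef)
    (hB : B.PosDef) : (mrpow A (-(1 / 2)) * B * mrpow A (-(1 / 2))).PosDef := by
  have hunit : IsUnit (mrpow A (-(1 / 2))) :=
    IsUnit.of_mul_eq_one _ (mrpow_neg_half_mul_mrpow_half hA)
  have h := (IsUnit.posDef_star_left_conjugate_iff hunit).2 hB
  rwa [star_eq_conjTranspose, (isHermitian_mrpow A _).eq] at h

end mrpow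

section meanGap

variable {n : ℕ} {A B : Matrix (Fin n) (Fin n) ℂ}

theorem cfc_meanGap {C : Matrix (Fin n) (Fin n) ℂ} (hC : C.IsHermitian) (t : ℝ) :
    cfc (meanGap t) C = (1 - t) • 1 + t • C - mrpow C t := by
  rw [show meanGap t = fun x => ((1 - t) + t * x) - x ^ t from rfl,
    cfc_sub _ _ C (finite_real_spectrum.continuousOn _) (finite_real_spectrum.continuousOn _),
    cfc_const_add _ _ C, cfc_const_mul_id t C, Algebra.algebraMap_eq_smul_one]
  rfl

theorem arithMean_sub_geomMean (hA : A.PosDef) (hB : B.PosDef) (t : ℝ) :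
    arithMean A B t - geomMean A B t = mrpow A (1 / 2) *
      cfc (meanGap t) (mrpow A (-(1 / 2)) * B * mrpow A (-(1 / 2))) * mrpow A (1 / 2) := by
  have hSCS : mrpow A (1 / 2) * (mrpow A (-(1 / 2)) * B * mrpow A (-(1 / 2))) * mrpow A (1 / 2)
      = B := calc
    _ = (mrpow A (1 / 2) * mrpow A (-(1 / 2))) * B * (mrpow A (-(1 / 2)) * mrpow A (1 / 2)) := by
      simp only [mul_assoc]
    _ = B := by
      rw [mrpow_half_mul_mrpow_neg_half hA, mrpow_neg_half_mul_mrpow_half hA, one_mul, mul_one]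
  rw [cfc_meanGap (hA.mrpow_neg_half_conj hB).isHermitian, mul_sub, sub_mul, mul_add, add_mul,
    Matrix.mul_smul, Matrix.smul_mul, Matrix.mul_smul, Matrix.smul_mul, mul_one,
    mrpow_half_mul_self hA, hSCS]
  rfl

theorem smul_arithMean_sub_geomMean (hA : A.PosDef) (hB : B.PosDef) (c t : ℝ) :
    c • (arithMean A B t - geomMean A B t) = mrpow A (1 / 2) *
      cfc (fun x => c * meanGap t x) (mrpow A (-(1 / 2)) * B * mrpow A (-(1 / 2))) *
        mrpow A (1 / 2) := by
  rw [cfc_const_mul _ _ _ (finite_real_spectrum.continuousOn _), Matrix.mul_smul,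
    Matrix.smul_mul, arithMean_sub_geomMean hA hB]

theorem smul_arithMean_sub_geomMean_le (hA : A.PosDef) (hB : B.PosDef) {c d s u : ℝ}
    (h : ∀ x, 0 < x → c * meanGap s x ≤ d * meanGap u x) :
    c • (arithMean A B s - geomMean A B s) ≤ d • (arithMean A B u - geomMean A B u) := by
  rw [smul_arithMean_sub_geomMean hA hB, smul_arithMean_sub_geomMean hA hB]
  exact (isHermitian_mrpow A _).isSelfAdjoint.conjugate_le_conjugate <|
    cfc_mono (fun x hx => h x ((hA.mrpow_neg_half_conj hB).isStrictlyPositive.spectrum_pos hx))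
      (finite_real_spectrum.continuousOn _) (finite_real_spectrum.continuousOn _)

end meanGap

theorem stmt8 (n : ℕ) (A B : Matrix (Fin n) (Fin n) ℂ) (hA : A.PosDef) (hB : B.PosDef)
    (t : ℝ) (ht : t ∈ Set.Icc (0 : ℝ) 1)
    (r R : ℝ) (hr : r = min t (1 - t)) (hR : R = max t (1 - t)) :
    ((arithMean A B t - geomMean A B t) -
        (2 * r) • (arithMean A B (1 / 2) - geomMean A B (1 / 2))).PosSemidef ∧
      ((2 * R) • (arithMean A B (1 / 2) - geomMean A B (1 / 2)) -
        (arithMean A B t - geomMean A B t)).PosSemidef := by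
  have hg (x : ℝ) (hx : 0 < x) : ConcaveOn ℝ (Icc 0 1) (meanGap · x) :=
    (concaveOn_meanGap hx).subset (subset_univ _) (convex_Icc 0 1)
  rw [← Matrix.le_iff, ← Matrix.le_iff]
  subst hr hR
  constructor
  · simpa only [one_smul] using smul_arithMean_sub_geomMean_le hA hB (d := 1) fun x hx => by
      simpa only [one_mul] using (hg x hx).two_mul_min_mul_le (meanGap_zero x) (meanGap_one x) ht
  · simpa only [one_smul] using smul_arithMean_sub_geomMean_le hA hB (c := 1) fun x hx => by
      simpa only [one_mul] using (hg x hx).le_two_mul_max_mul (meanGap_zero x) (meanGap_one x) ht
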